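/- In a residuated lattice, for elements x, y: x^⊥ = y^⊥ if and only if the set of minimal prime filters containing x equals the set of minimal prime filters containing y. -/

import Mathlib

/-!
A minimal prime filter `m` contains `x` exactly when it does not contain all of `x^⊥`, and `x^⊥` is
the intersection of the minimal prime filters missing `x`, because every `a ≠ 1` is missed by one
(prime filter theorem plus Zorn). So `x^⊥` and the set of minimal prime filters containing `x`
determine each other.
-/

/-- A (bounded, integral, commutative) residuated lattice. -/
class ResLattice (A : Type*) extends Lattice A, CommMonoid A, OrderBot A where
  himp : A → A → A
  adjunction : ∀ x y z : A, x * y ≤ z ↔ x ≤ himp y z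
  le_one : ∀ x : A, x ≤ 1

variable {A : Type*} [ResLattice A]

/-- Coannihilator of a subset: `X^⊥ = {a | a ⊔ x = 1 for all x ∈ X}`. -/
def Coann (X : Set A) : Set A := {a | ∀ x ∈ X, a ⊔ x = 1}

/-- Coannulet of an element: `x^⊥`. -/
def rperp (x : A) : Set A := Coann {x}

/-- The principal filter generated by `x`. -/
def PFil (x : A) : Set A := {a | ∃ n : ℕ, 0 < n ∧ x ^ n ≤ a}

/-- Filters of a residuated lattice. -/
def IsRLFilter (F : Set A) : Prop :=
  F.Nonempty ∧ (∀ x ∈ F, ∀ y ∈ F, x * y ∈ F) ∧ (∀ x ∈ F, ∀ y : A, x ⊔ y ∈ F)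

/-- Prime filters. -/
def IsRLPrime (P : Set A) : Prop :=
  IsRLFilter P ∧ P ≠ Set.univ ∧ ∀ x y : A, x ⊔ y ∈ P → x ∈ P ∨ y ∈ P

/-- Minimal prime filters. -/
def IsRLMinPrime (P : Set A) : Prop :=
  IsRLPrime P ∧ ∀ Q : Set A, IsRLPrime Q → Q ⊆ P → Q = P

/-- Quasicomplemented residuated lattice. -/
def Quasicomplemented (A : Type*) [ResLattice A] : Prop :=
  ∀ x : A, ∃ y : A, Coann (rperp x) = rperp y

/-- α-filters. -/
def IsAlphaFilter (F : Set A) : Prop :=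
  IsRLFilter F ∧ ∀ x ∈ F, Coann (rperp x) ⊆ F

/-- The α-filter generated by a subset. -/
def alphaGen (X : Set A) : Set A := ⋂₀ {G : Set A | IsAlphaFilter G ∧ X ⊆ G}

namespace ResLattice

theorem gc_mul_himp (a : A) : GaloisConnection (· * a) (himp a) :=
  fun x z => adjunction x a z

instance : IsOrderedMonoid A where
  mul_le_mul_left _ _ h c := (gc_mul_himp c).monotone_l h

theorem sup_mul (a b c : A) : (a ⊔ b) * c = a * c ⊔ b * c :=
  (gc_mul_himp c).l_sup

theorem mul_sup (a b c : A) : a * (b ⊔ c) = a * b ⊔ a * c := by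
  simp only [mul_comm a, sup_mul]

theorem sup_pow_le (a b : A) (n : ℕ) : (a ⊔ b) ^ n ≤ a ^ n ⊔ b := by
  induction n with
  | zero => simp
  | succ n ih =>
    calc (a ⊔ b) ^ (n + 1) ≤ (a ^ n ⊔ b) * (a ⊔ b) := by
          rw [pow_succ]; exact mul_le_mul_left ih _
      _ = (a ^ n * a ⊔ b * a) ⊔ (a ^ n ⊔ b) * b := by rw [mul_sup, sup_mul]
      _ ≤ a ^ (n + 1) ⊔ b := by
          rw [pow_succ]
          exact sup_le (sup_le_sup_left (mul_le_of_le_one_right' (le_one a)) _)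
            (le_sup_of_le_right (mul_le_of_le_one_left' (le_one _)))

end ResLattice

open ResLattice (le_one sup_pow_le)

theorem mem_rperp {a x : A} : a ∈ rperp x ↔ a ⊔ x = 1 := by
  simp [rperp, Coann]

def filterAdjoin (F : Set A) (a : A) : Set A := {c | ∃ f ∈ F, ∃ n : ℕ, f * a ^ n ≤ c}

theorem isRLFilter_singleton_one : IsRLFilter ({1} : Set A) :=
  ⟨Set.singleton_nonempty 1, by simp, fun _ hx y => by
    rw [Set.mem_singleton_iff.1 hx, sup_eq_left.2 (le_one y)]; rfl⟩

theorem subset_filterAdjoin (F : Set A) (a : A) : F ⊆ filterAdjoin F a :=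
  fun f hf => ⟨f, hf, 0, by simp⟩

namespace IsRLFilter

variable {F : Set A} (hF : IsRLFilter F)
include hF

theorem mem_of_le {a c : A} (ha : a ∈ F) (hac : a ≤ c) : c ∈ F := by
  simpa [sup_eq_right.2 hac] using hF.2.2 a ha c

theorem one_mem : (1 : A) ∈ F :=
  let ⟨a, ha⟩ := hF.1
  hF.mem_of_le ha (le_one a)

theorem mul_mem {a b : A} (ha : a ∈ F) (hb : b ∈ F) : a * b ∈ F :=
  hF.2.1 a ha b hb

theorem pow_mem {a : A} (ha : a ∈ F) (n : ℕ) : a ^ n ∈ F := by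
  induction n with
  | zero => simpa using hF.one_mem
  | succ n ih => simpa [pow_succ] using hF.mul_mem ih ha

theorem mem_filterAdjoin (a : A) : a ∈ filterAdjoin F a :=
  let ⟨f, hf⟩ := hF.1
  ⟨f, hf, 1, by simpa using mul_le_of_le_one_left' (le_one f)⟩

theorem filterAdjoin_isRLFilter (a : A) : IsRLFilter (filterAdjoin F a) := by
  refine ⟨⟨a, hF.mem_filterAdjoin a⟩, ?_, ?_⟩
  · rintro c₁ ⟨f₁, hf₁, n₁, h₁⟩ c₂ ⟨f₂, hf₂, n₂, h₂⟩
    refine ⟨f₁ * f₂, hF.mul_mem hf₁ hf₂, n₁ + n₂, ?_⟩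
    rw [pow_add, mul_mul_mul_comm]
    exact mul_le_mul' h₁ h₂
  · rintro c ⟨f, hf, n, h⟩ y
    exact ⟨f, hf, n, le_sup_of_le_left h⟩

theorem sup_mem_of_mem_filterAdjoin {a b d : A} (hab : a ⊔ b ∈ F)
    (hd : d ∈ filterAdjoin F a) : d ⊔ b ∈ F := by
  obtain ⟨f, hf, n, hfd⟩ := hd
  have hpow : a ^ n ⊔ b ∈ F := hF.mem_of_le (hF.pow_mem hab n) (sup_pow_le a b n)
  refine hF.mem_of_le (hF.mul_mem hf hpow) ?_
  rw [ResLattice.mul_sup]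
  exact sup_le_sup hfd (mul_le_of_le_one_left' (le_one f))

end IsRLFilter

theorem IsRLPrime.bot_notMem {P : Set A} (hP : IsRLPrime P) : (⊥ : A) ∉ P :=
  fun hbot => hP.2.1 (Set.eq_univ_of_forall fun _ => hP.1.mem_of_le hbot bot_le)

theorem IsRLPrime.rperp_subset_of_notMem {P : Set A} (hP : IsRLPrime P) {x : A} (hx : x ∉ P) :
    rperp x ⊆ P := fun b hb =>
  (hP.2.2 b x (mem_rperp.1 hb ▸ hP.1.one_mem)).resolve_right hx

theorem isRLFilter_sUnion_of_isChain {c : Set (Set A)} (hc : ∀ F ∈ c, IsRLFilter F)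
    (hchain : IsChain (· ⊆ ·) c) (hne : c.Nonempty) : IsRLFilter (⋃₀ c) := by
  refine ⟨?_, ?_, ?_⟩
  · obtain ⟨F, hF⟩ := hne
    obtain ⟨f, hf⟩ := (hc F hF).1
    exact ⟨f, F, hF, hf⟩
  · rintro u ⟨F₁, hF₁, hu⟩ v ⟨F₂, hF₂, hv⟩
    rcases hchain.total hF₁ hF₂ with h | h
    · exact ⟨F₂, hF₂, (hc F₂ hF₂).mul_mem (h hu) hv⟩
    · exact ⟨F₁, hF₁, (hc F₁ hF₁).mul_mem hu (h hv)⟩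
  · rintro u ⟨F, hF, hu⟩ v
    exact ⟨F, hF, (hc F hF).2.2 u hu v⟩

theorem isRLPrime_sInter_of_isChain {c : Set (Set A)} (hc : ∀ P ∈ c, IsRLPrime P)
    (hchain : IsChain (· ⊆ ·) c) (hne : c.Nonempty) : IsRLPrime (⋂₀ c) := by
  obtain ⟨P₀, hP₀⟩ := hne
  refine ⟨⟨⟨1, fun P hP => (hc P hP).1.one_mem⟩, ?_, ?_⟩, ?_, ?_⟩
  · exact fun u hu v hv P hP => (hc P hP).1.mul_mem (hu P hP) (hv P hP)
  · exact fun u hu v P hP => (hc P hP).1.2.2 u (hu P hP) v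
  · exact fun huniv => (hc P₀ hP₀).2.1 (Set.eq_univ_of_univ_subset
      (huniv ▸ Set.sInter_subset_of_mem hP₀))
  · intro u v huv
    by_contra! hcon
    obtain ⟨⟨P₁, hP₁, hu⟩, ⟨P₂, hP₂, hv⟩⟩ :
        (∃ P ∈ c, u ∉ P) ∧ ∃ P ∈ c, v ∉ P := by
      simpa only [Set.mem_sInter, not_forall, exists_prop] using hcon
    rcases hchain.total hP₁ hP₂ with h | h
    · exact ((hc P₁ hP₁).2.2 u v (huv P₁ hP₁)).elim hu (fun hv₁ => hv (h hv₁))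
    · exact ((hc P₂ hP₂).2.2 u v (huv P₂ hP₂)).elim (fun hu₂ => hu (h hu₂)) hv

theorem exists_isRLPrime_disjoint {S F : Set A} (hS : ∀ a ∈ S, ∀ b ∈ S, a ⊔ b ∈ S)
    (hSne : S.Nonempty) (hF : IsRLFilter F) (hFS : Disjoint F S) :
    ∃ P : Set A, IsRLPrime P ∧ F ⊆ P ∧ Disjoint P S := by
  set T : Set (Set A) := {G | IsRLFilter G ∧ F ⊆ G ∧ Disjoint G S}
  obtain ⟨M, hFM, hM⟩ := zorn_subset_nonempty T (fun c hcT hchain hne => by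
    obtain ⟨G, hG⟩ := hne
    refine ⟨⋃₀ c, ⟨isRLFilter_sUnion_of_isChain (fun G hG => (hcT hG).1) hchain ⟨G, hG⟩,
      (hcT hG).2.1.trans (Set.subset_sUnion_of_mem hG),
      Set.disjoint_sUnion_left.2 fun G hG => (hcT hG).2.2⟩,
      fun _ => Set.subset_sUnion_of_mem⟩) F ⟨hF, subset_rfl, hFS⟩
  obtain ⟨hMfil, -, hMS⟩ := hM.prop
  have hmeet : ∀ u ∉ M, ∃ d ∈ S, d ∈ filterAdjoin M u := by
    intro u hu
    by_contra! hno
    have hT : filterAdjoin M u ∈ T := ⟨hMfil.filterAdjoin_isRLFilter u,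
      hFM.trans (subset_filterAdjoin M u), Set.disjoint_right.2 hno⟩
    exact hu (hM.eq_of_subset hT (subset_filterAdjoin M u) ▸ hMfil.mem_filterAdjoin u)
  refine ⟨M, ⟨hMfil, ?_, ?_⟩, hFM, hMS⟩
  · obtain ⟨s, hs⟩ := hSne
    exact fun huniv => Set.disjoint_left.1 hMS (huniv ▸ Set.mem_univ s) hs
  · intro a b hab
    by_contra! hcon
    obtain ⟨d₁, hd₁S, hd₁⟩ := hmeet a hcon.1
    obtain ⟨d₂, hd₂S, hd₂⟩ := hmeet b hcon.2
    have hbd₁ : b ⊔ d₁ ∈ M := sup_comm d₁ b ▸ hMfil.sup_mem_of_mem_filterAdjoin hab hd₁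
    exact Set.disjoint_left.1 hMS (hMfil.sup_mem_of_mem_filterAdjoin hbd₁ hd₂)
      (hS d₂ hd₂S d₁ hd₁S)

theorem IsRLPrime.exists_isRLMinPrime_subset {P : Set A} (hP : IsRLPrime P) :
    ∃ m : Set A, IsRLMinPrime m ∧ m ⊆ P := by
  obtain ⟨m, hmP, hm⟩ := zorn_superset_nonempty {Q | IsRLPrime Q ∧ Q ⊆ P}
    (fun c hcT hchain hne => by
      obtain ⟨Q, hQ⟩ := hne
      exact ⟨⋂₀ c, ⟨isRLPrime_sInter_of_isChain (fun Q hQ => (hcT hQ).1) hchain ⟨Q, hQ⟩,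
        (Set.sInter_subset_of_mem hQ).trans (hcT hQ).2⟩, fun _ => Set.sInter_subset_of_mem⟩)
    P ⟨hP, subset_rfl⟩
  exact ⟨m, ⟨hm.prop.1, fun Q hQ hQm =>
    hQm.antisymm (hm.2 ⟨hQ, hQm.trans hmP⟩ hQm)⟩, hmP⟩

theorem exists_isRLMinPrime_notMem {z : A} (hz : z ≠ 1) :
    ∃ m : Set A, IsRLMinPrime m ∧ z ∉ m := by
  obtain ⟨P, hP, -, hPz⟩ := exists_isRLPrime_disjoint (S := {z})
    (by simp) (Set.singleton_nonempty z) isRLFilter_singleton_one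
    (Set.disjoint_singleton.2 hz.symm)
  obtain ⟨m, hm, hmP⟩ := hP.exists_isRLMinPrime_subset
  exact ⟨m, hm, fun hzm => Set.disjoint_singleton_right.1 hPz (hmP hzm)⟩

/-- Otherwise `x^⊥ ⊆ m`, and separating `1` from `{x ⊔ b | b ∉ m}` yields a prime filter inside `m`
that misses `x`. -/
theorem IsRLMinPrime.exists_notMem_sup_eq_one {m : Set A} (hm : IsRLMinPrime m) {x : A}
    (hx : x ∈ m) : ∃ b ∉ m, b ⊔ x = 1 := by
  by_contra! hperp
  set S : Set A := {s | ∃ b ∉ m, s = x ⊔ b}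
  have hS : ∀ a ∈ S, ∀ b ∈ S, a ⊔ b ∈ S := by
    rintro _ ⟨b₁, hb₁, rfl⟩ _ ⟨b₂, hb₂, rfl⟩
    refine ⟨b₁ ⊔ b₂, fun h => (hm.1.2.2 b₁ b₂ h).elim hb₁ hb₂, ?_⟩
    rw [sup_sup_sup_comm, sup_idem]
  have hxS : x ∈ S := ⟨⊥, hm.1.bot_notMem, (sup_bot_eq x).symm⟩
  have hOneS : Disjoint {1} S := by
    refine Set.disjoint_singleton_left.2 fun ⟨b, hb, hxb⟩ => hperp b hb ?_
    rw [sup_comm, ← hxb]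
  obtain ⟨P, hP, -, hPS⟩ := exists_isRLPrime_disjoint hS ⟨x, hxS⟩ isRLFilter_singleton_one hOneS
  have hPm : P ⊆ m := fun p hp => by
    by_contra hpm
    exact Set.disjoint_left.1 hPS (sup_comm p x ▸ hP.1.2.2 p hp x) ⟨p, hpm, rfl⟩
  exact Set.disjoint_left.1 hPS (hm.2 P hP hPm ▸ hx) hxS

theorem IsRLMinPrime.mem_iff_not_rperp_subset {m : Set A} (hm : IsRLMinPrime m) {x : A} :
    x ∈ m ↔ ¬ rperp x ⊆ m := by
  refine ⟨fun hx hsub => ?_, not_imp_comm.1 hm.1.rperp_subset_of_notMem⟩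
  obtain ⟨b, hb, hbx⟩ := hm.exists_notMem_sup_eq_one hx
  exact hb (hsub (mem_rperp.2 hbx))

theorem rperp_eq_sInter (x : A) :
    rperp x = ⋂₀ ({m | IsRLMinPrime m} \ {m : Set A | IsRLMinPrime m ∧ x ∈ m}) := by
  refine Set.Subset.antisymm (fun a ha m ⟨hm, hxm⟩ => ?_) fun a ha => ?_
  · exact hm.1.rperp_subset_of_notMem (fun hx => hxm ⟨hm, hx⟩) ha
  · refine mem_rperp.2 (by_contra fun hne => ?_)
    obtain ⟨m, hm, hax⟩ := exists_isRLMinPrime_notMem hne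
    have hxm : x ∉ m := fun hx => hax (hm.1.1.mem_of_le hx le_sup_right)
    exact hax (hm.1.1.mem_of_le (ha m ⟨hm, fun h => hxm h.2⟩) le_sup_left)

theorem stmt6 (x y : A) :
    rperp x = rperp y ↔
      {m : Set A | IsRLMinPrime m ∧ x ∈ m} = {m : Set A | IsRLMinPrime m ∧ y ∈ m} := by
  constructor
  · intro h
    ext m
    exact and_congr_right fun hm => by
      rw [hm.mem_iff_not_rperp_subset, hm.mem_iff_not_rperp_subset, h]
  · intro h
    rw [rperp_eq_sInter, rperp_eq_sInter, h]
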